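/- The positive part tsns₊ of the twisted N=1 Schrödinger-Neveu-Schwarz algebra is generated as a Lie superalgebra by the four elements G_{3/2}, G_{1/2}, Y_{1/2}, M_{1/2}. -/

import Mathlib

noncomputable section

/-- Basis of the twisted N=1 Schrodinger-Neveu-Schwarz algebra.
`L n` is L_n, `G k` is G_{k+1/2}, `Y p` is Y_{p/2}, `M p` is M_{p/2}, `C` is the central element. -/
inductive B : Type
  | L : ℤ → B
  | G : ℤ → B
  | Y : ℤ → B
  | M : ℤ → B
  | C : B
deriving DecidableEq

/-- The underlying vector space of tsns. -/
abbrev V := B →₀ ℂ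

/-- Basis vectors. -/
def e (x : B) : V := Finsupp.single x 1

/-- Parity of a basis element. -/
def isOdd : B → Bool
  | .G _ => true
  | .Y p => if p % 2 = 0 then false else true
  | .M p => if p % 2 = 0 then false else true
  | _ => false

/-- The Koszul sign (-1)^{|x||y|}. -/
def sgn (x y : B) : ℂ := if isOdd x && isOdd y then -1 else 1

/-- The super-bracket on basis elements of tsns. -/
def bb : B → B → V
  | .L n, .L m => ((m : ℂ) - n) • e (.L (n+m)) +
      (if m = -n then (((n:ℂ)^3 - (n:ℂ))/12) • e B.C else 0)
  | .L n, .G k => ((k : ℂ) + 1/2 - (n:ℂ)/2) • e (.G (k+n))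
  | .G k, .L n => (-((k : ℂ) + 1/2 - (n:ℂ)/2)) • e (.G (k+n))
  | .G k, .G l => (2:ℂ) • e (.L (k+l+1)) +
      (if l = -k-1 then ((1 - 4*((k:ℂ)+1/2)^2)/12) • e B.C else 0)
  | .L n, .Y p => (if p % 2 = 0 then (p:ℂ)/2 - (n:ℂ)/2 else (p:ℂ)/2) • e (.Y (p + 2*n))
  | .Y p, .L n => (-(if p % 2 = 0 then (p:ℂ)/2 - (n:ℂ)/2 else (p:ℂ)/2)) • e (.Y (p + 2*n))
  | .L n, .M p => (if p % 2 = 0 then (p:ℂ)/2 else (p:ℂ)/2 + (n:ℂ)/2) • e (.M (p + 2*n))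
  | .M p, .L n => (-(if p % 2 = 0 then (p:ℂ)/2 else (p:ℂ)/2 + (n:ℂ)/2)) • e (.M (p + 2*n))
  | .G k, .Y p => (if p % 2 = 0 then ((p:ℂ)/2 - ((k:ℂ)+1/2))/2 else 2) • e (.Y (p + 2*k + 1))
  | .Y p, .G k => (if p % 2 = 0 then -(((p:ℂ)/2 - ((k:ℂ)+1/2))/2) else 2) • e (.Y (p + 2*k + 1))
  | .G k, .M p => (if p % 2 = 0 then (p:ℂ)/4 else 2) • e (.M (p + 2*k + 1))
  | .M p, .G k => (if p % 2 = 0 then -((p:ℂ)/4) else 2) • e (.M (p + 2*k + 1))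
  | .Y p, .Y q => (if p % 2 = 0 then (if q % 2 = 0 then ((q:ℂ) - p)/4 else (q:ℂ)/4)
      else (if q % 2 = 0 then -((p:ℂ)/4) else 2)) • e (.M (p + q))
  | _, _ => 0

/-- Bilinear extension of the bracket to all of tsns. -/
def br (f g : V) : V := f.sum fun x a => g.sum fun y b => (a * b) • bb x y

/-- The positive part tsns₊. -/
def tsnsPlus : Submodule ℂ V :=
  Submodule.span ℂ {v : V | (∃ n : ℤ, 0 < n ∧ v = e (.L n)) ∨
    (∃ p : ℤ, 0 < p ∧ (v = e (.Y p) ∨ v = e (.M p))) ∨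
    (∃ k : ℤ, 0 ≤ k ∧ v = e (.G k))}

/-!
The spanning vectors of tsns₊ all have positive degree (`G k` has degree `k + 1/2`), degrees add
under the bracket, and the central terms only occur in degree `0`; so tsns₊ is closed.
Conversely `[G_{1/2}, G_{1/2}] = 2 L_1` and `[G_{1/2}, G_{3/2}] = 2 L_2`; then `ad L_1` raises
`L_n` (`n ≥ 2`), `G_{k+1/2}` (`k ≥ 1`), and `Y_q`, `M_q` (`q ∈ 1/2 + ℕ`) by one step with a
nonzero coefficient, while `ad G_{1/2}` takes `Y_q`, `M_q` (`q ∈ 1/2 + ℕ`) to `Y_{q+1/2}`, `M_{q+1/2}`.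
-/

lemma Int.forall_pos_of_odd_step {Q : ℤ → Prop} (h1 : Q 1)
    (hodd : ∀ p, p % 2 = 1 → 0 < p → Q p → Q (p + 2)) (heven : ∀ p, p % 2 = 1 → Q p → Q (p + 1)) :
    ∀ p, 0 < p → Q p := by
  have hodd' : ∀ j, 0 ≤ j → Q (2 * j + 1) := by
    intro j hj
    induction j, hj using Int.leInduction with
    | base => simpa using h1
    | succ j hj hQ =>
      have := hodd _ (by omega) (by omega) hQ
      rwa [show 2 * j + 1 + 2 = 2 * (j + 1) + 1 by ring] at this
  intro p hp
  rcases Int.emod_two_eq_zero_or_one p with h | h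
  · have := heven _ (by omega) (hodd' ((p - 2) / 2) (by omega))
    rwa [show 2 * ((p - 2) / 2) + 1 + 1 = p by omega] at this
  · rw [show p = 2 * ((p - 1) / 2) + 1 by omega]
    exact hodd' _ (by omega)

def bbL (x : B) : V →ₗ[ℂ] V := Finsupp.lsum ℂ fun y => LinearMap.toSpanSingleton ℂ V (bb x y)

def brL : V →ₗ[ℂ] V →ₗ[ℂ] V :=
  Finsupp.lsum ℂ fun x => LinearMap.toSpanSingleton ℂ (V →ₗ[ℂ] V) (bbL x)

lemma br_eq_brL (f g : V) : br f g = brL f g := by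
  simp only [br, brL, bbL, Finsupp.lsum_apply, Finsupp.sum, LinearMap.toSpanSingleton_apply,
    LinearMap.sum_apply, LinearMap.smul_apply, Finset.smul_sum, smul_smul]

lemma br_e_e (x y : B) : br (e x) (e y) = bb x y := by
  simp [br_eq_brL, brL, bbL, e]

section StructureConstants

variable (n m k l p : ℤ)

lemma bb_L_L_of_ne (h : m ≠ -n) : bb (.L n) (.L m) = ((m : ℂ) - n) • e (.L (n + m)) := by
  simp [bb, h]

lemma bb_G_G_of_ne (h : l ≠ -k - 1) : bb (.G k) (.G l) = (2 : ℂ) • e (.L (k + l + 1)) := by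
  simp [bb, h]

lemma bb_L_one_G : bb (.L 1) (.G k) = (k : ℂ) • e (.G (k + 1)) := by
  simp only [bb]; norm_num

lemma bb_L_Y_of_odd (hp : p % 2 = 1) : bb (.L n) (.Y p) = ((p : ℂ) / 2) • e (.Y (p + 2 * n)) := by
  simp [bb, hp]

lemma bb_L_M_of_odd (hp : p % 2 = 1) :
    bb (.L n) (.M p) = (((p : ℂ) + n) / 2) • e (.M (p + 2 * n)) := by
  simp [bb, hp, add_div]

lemma bb_G_Y_of_odd (hp : p % 2 = 1) : bb (.G k) (.Y p) = (2 : ℂ) • e (.Y (p + 2 * k + 1)) := by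
  simp [bb, hp]

lemma bb_G_M_of_odd (hp : p % 2 = 1) : bb (.G k) (.M p) = (2 : ℂ) • e (.M (p + 2 * k + 1)) := by
  simp [bb, hp]

end StructureConstants

def B.IsPositive : B → Prop
  | .L n => 0 < n
  | .G k => 0 ≤ k
  | .Y p => 0 < p
  | .M p => 0 < p
  | .C => False

lemma tsnsPlus_eq_span : tsnsPlus = Submodule.span ℂ (e '' {x | x.IsPositive}) := by
  unfold tsnsPlus
  congr 1
  ext v
  constructor
  · rintro (⟨n, hn, rfl⟩ | ⟨p, hp, rfl | rfl⟩ | ⟨k, hk, rfl⟩)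
    exacts [⟨.L n, hn, rfl⟩, ⟨.Y p, hp, rfl⟩, ⟨.M p, hp, rfl⟩, ⟨.G k, hk, rfl⟩]
  · rintro ⟨x, hx, rfl⟩
    cases x with
    | L n => exact Or.inl ⟨n, hx, rfl⟩
    | G k => exact Or.inr (Or.inr ⟨k, hx, rfl⟩)
    | Y p => exact Or.inr (Or.inl ⟨p, hx, Or.inl rfl⟩)
    | M p => exact Or.inr (Or.inl ⟨p, hx, Or.inr rfl⟩)
    | C => exact hx.elim

lemma e_mem_tsnsPlus {x : B} (hx : x.IsPositive) : e x ∈ tsnsPlus :=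
  tsnsPlus_eq_span ▸ Submodule.subset_span ⟨x, hx, rfl⟩

lemma bb_mem_tsnsPlus {a b : B} (ha : a.IsPositive) (hb : b.IsPositive) :
    bb a b ∈ tsnsPlus := by
  have smul_e_mem {x : B} (c : ℂ) (hx : x.IsPositive) : c • e x ∈ tsnsPlus :=
    tsnsPlus.smul_mem c (e_mem_tsnsPlus hx)
  cases a <;> cases b <;> simp only [B.IsPositive] at ha hb <;> simp only [bb]
  all_goals first
    | exact zero_mem _
    | exact smul_e_mem _ (by simp only [B.IsPositive]; omega)
    | rw [if_neg (by omega), add_zero]; exact smul_e_mem _ (by simp only [B.IsPositive]; omega)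

lemma br_mem_tsnsPlus {x y : V} (hx : x ∈ tsnsPlus) (hy : y ∈ tsnsPlus) : br x y ∈ tsnsPlus := by
  have hle : Submodule.map₂ brL tsnsPlus tsnsPlus ≤ tsnsPlus := calc
    _ = Submodule.span ℂ (Set.image2 (fun v w => brL v w) (e '' {x | x.IsPositive})
          (e '' {x | x.IsPositive})) := by
      rw [tsnsPlus_eq_span, Submodule.map₂_span_span]
    _ ≤ tsnsPlus := by
      rw [Submodule.span_le]
      rintro _ ⟨_, ⟨a, ha, rfl⟩, _, ⟨b, hb, rfl⟩, rfl⟩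
      show brL (e a) (e b) ∈ tsnsPlus
      rw [← br_eq_brL, br_e_e]
      exact bb_mem_tsnsPlus ha hb
  rw [br_eq_brL]
  exact hle (Submodule.apply_mem_map₂ _ hx hy)

section Generation

variable {W : Submodule ℂ V}

lemma mem_of_bb_eq_smul (hW : ∀ x ∈ W, ∀ y ∈ W, br x y ∈ W) {a b z : B} {c : ℂ} (hc : c ≠ 0)
    (habz : bb a b = c • e z) (ha : e a ∈ W) (hb : e b ∈ W) : e z ∈ W :=
  (W.smul_mem_iff hc).1 (habz ▸ br_e_e a b ▸ hW _ ha _ hb)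

lemma e_L_one_mem (hW : ∀ x ∈ W, ∀ y ∈ W, br x y ∈ W) (hG0 : e (.G 0) ∈ W) : e (.L 1) ∈ W :=
  mem_of_bb_eq_smul hW two_ne_zero (bb_G_G_of_ne 0 0 (by omega)) hG0 hG0

lemma e_L_mem (hW : ∀ x ∈ W, ∀ y ∈ W, br x y ∈ W) (hG0 : e (.G 0) ∈ W) (hG1 : e (.G 1) ∈ W)
    (n : ℤ) (hn : 0 < n) : e (.L n) ∈ W := by
  obtain rfl | hn2 := (show n = 1 ∨ 2 ≤ n by omega)
  · exact e_L_one_mem hW hG0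
  clear hn
  induction n, hn2 using Int.leInduction with
  | base => exact mem_of_bb_eq_smul hW two_ne_zero (bb_G_G_of_ne 0 1 (by omega)) hG0 hG1
  | succ n hn2 hLn =>
    refine mem_of_bb_eq_smul hW (c := (n : ℂ) - 1) ?_ ?_ (e_L_one_mem hW hG0) hLn
    · exact sub_ne_zero.2 (by exact_mod_cast (show n ≠ 1 by omega))
    · rw [bb_L_L_of_ne 1 n (by omega), Int.cast_one, add_comm 1 n]

lemma e_G_mem (hW : ∀ x ∈ W, ∀ y ∈ W, br x y ∈ W) (hG0 : e (.G 0) ∈ W) (hG1 : e (.G 1) ∈ W)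
    (k : ℤ) (hk : 0 ≤ k) : e (.G k) ∈ W := by
  obtain rfl | hk1 := (show k = 0 ∨ 1 ≤ k by omega)
  · exact hG0
  clear hk
  induction k, hk1 using Int.leInduction with
  | base => exact hG1
  | succ k hk1 hGk =>
    exact mem_of_bb_eq_smul hW (by exact_mod_cast (show k ≠ 0 by omega)) (bb_L_one_G k)
      (e_L_one_mem hW hG0) hGk

lemma e_Y_mem (hW : ∀ x ∈ W, ∀ y ∈ W, br x y ∈ W) (hG0 : e (.G 0) ∈ W) (hY1 : e (.Y 1) ∈ W)
    (p : ℤ) (hp : 0 < p) : e (.Y p) ∈ W := by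
  refine Int.forall_pos_of_odd_step (Q := fun p => e (.Y p) ∈ W) hY1 (fun p hodd hp hYp => ?_)
    (fun p hodd hYp => ?_) p hp
  · refine mem_of_bb_eq_smul hW (c := (p : ℂ) / 2) ?_ ?_ (e_L_one_mem hW hG0) hYp
    · exact div_ne_zero (by exact_mod_cast hp.ne') two_ne_zero
    · rw [bb_L_Y_of_odd 1 p hodd, mul_one]
  · refine mem_of_bb_eq_smul hW two_ne_zero ?_ hG0 hYp
    rw [bb_G_Y_of_odd 0 p hodd, mul_zero, add_zero]

lemma e_M_mem (hW : ∀ x ∈ W, ∀ y ∈ W, br x y ∈ W) (hG0 : e (.G 0) ∈ W) (hM1 : e (.M 1) ∈ W)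
    (p : ℤ) (hp : 0 < p) : e (.M p) ∈ W := by
  refine Int.forall_pos_of_odd_step (Q := fun p => e (.M p) ∈ W) hM1 (fun p hodd hp hMp => ?_)
    (fun p hodd hMp => ?_) p hp
  · refine mem_of_bb_eq_smul hW (c := ((p : ℂ) + 1) / 2) ?_ ?_ (e_L_one_mem hW hG0) hMp
    · exact div_ne_zero (by exact_mod_cast (show p + 1 ≠ 0 by omega)) two_ne_zero
    · rw [bb_L_M_of_odd 1 p hodd, Int.cast_one, mul_one]
  · refine mem_of_bb_eq_smul hW two_ne_zero ?_ hG0 hMp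
    rw [bb_G_M_of_odd 0 p hodd, mul_zero, add_zero]

end Generation

/-- tsns₊ is generated as a Lie superalgebra by G_{3/2}, G_{1/2}, Y_{1/2},
M_{1/2}: it contains the generators, is closed under the bracket, and is the smallest
bracket-closed subspace containing them. -/
theorem tsnsPlus_generated :
    ({e (.G 1), e (.G 0), e (.Y 1), e (.M 1)} : Set V) ⊆ (tsnsPlus : Set V) ∧
    (∀ x ∈ tsnsPlus, ∀ y ∈ tsnsPlus, br x y ∈ tsnsPlus) ∧
    (∀ W : Submodule ℂ V, ({e (.G 1), e (.G 0), e (.Y 1), e (.M 1)} : Set V) ⊆ (W : Set V) →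
      (∀ x ∈ W, ∀ y ∈ W, br x y ∈ W) → tsnsPlus ≤ W) := by
  refine ⟨?_, fun x hx y hy => br_mem_tsnsPlus hx hy, fun W hgen hW => ?_⟩
  · simp only [Set.insert_subset_iff, Set.singleton_subset_iff, SetLike.mem_coe]
    exact ⟨e_mem_tsnsPlus (x := .G 1) zero_le_one, e_mem_tsnsPlus (x := .G 0) le_rfl,
      e_mem_tsnsPlus (x := .Y 1) one_pos, e_mem_tsnsPlus (x := .M 1) one_pos⟩
  simp only [Set.insert_subset_iff, Set.singleton_subset_iff, SetLike.mem_coe] at hgen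
  obtain ⟨hG1, hG0, hY1, hM1⟩ := hgen
  rw [tsnsPlus_eq_span, Submodule.span_le]
  rintro _ ⟨x, hx, rfl⟩
  cases x with
  | L n => exact e_L_mem hW hG0 hG1 n hx
  | G k => exact e_G_mem hW hG0 hG1 k hx
  | Y p => exact e_Y_mem hW hG0 hY1 p hx
  | M p => exact e_M_mem hW hG0 hM1 p hx
  | C => exact hx.elim
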